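/- arXiv:1108.3113 — 8 statements merged into one kernel-verified Lean document; each statement's English description precedes it below -/
import Mathlib

section
/- Let n ≥ 3 be odd and let (v₁,…,v_{n−1}) be an (n−1)-icube in ℤⁿ with edge norm N. Then (v₁,…,v_{n−1}) extends to an n-icube in ℤⁿ if and only if N is a perfect square (i.e., the common length is an integer). -/
/-!
For `m` pairwise orthogonal vectors `r i` of squared length `N` in `R^(m+1)` and any vector `x`,
orthogonalising `x` against the `r i` turns the Gram determinant into a diagonal one and gives
`N² · det(r, x)² = N^(m+1) · (N ‖x‖² - ∑ (r i ⬝ x)²)`.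
If `w` completes the icube this reads `det(v, w)² = N^n`, and since `n` is odd, `N` is a square.
Conversely, if `N = k²`, the generalized cross product `u` of the `v i` is orthogonal to them, the
identity at the unit vectors shows `k^(n-2) ∣ u j`, and summing it over `j` gives
`‖u‖² = N^(n-1)`; so `w = u / k^(n-2)` is an integral vector of squared length `k²`.
-/

open Matrix

namespace Matrix

variable {ι R : Type*} [Fintype ι] [DecidableEq ι] [CommRing R]

theorem det_of_sq_eq_prod_dotProduct_self (a : ι → ι → R)
    (h : Pairwise fun i j => a i ⬝ᵥ a j = 0) : (of a).det ^ 2 = ∏ i, a i ⬝ᵥ a i := by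
  have hgram : of a * (of a)ᵀ = diagonal fun i => a i ⬝ᵥ a i := by
    ext i j
    rcases eq_or_ne i j with rfl | hij
    · simp [mul_apply, dotProduct]
    · simpa [mul_apply, dotProduct, hij] using h hij
  calc (of a).det ^ 2 = (of a * (of a)ᵀ).det := by rw [det_mul, det_transpose, sq]
    _ = ∏ i, a i ⬝ᵥ a i := by rw [hgram, det_diagonal]

end Matrix

section SnocRow

variable {R : Type*} {m : ℕ}

theorem updateRow_of_snoc_last (r : Fin m → Fin (m + 1) → R) (x y : Fin (m + 1) → R) :
    updateRow (of (Fin.snoc r x)) (Fin.last m) y = of (Fin.snoc r y) := by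
  ext i j
  induction i using Fin.lastCases <;> simp [updateRow_apply, (Fin.castSucc_lt_last _).ne]

variable [CommRing R]

theorem det_snoc_sq_of_orthogonal (r : Fin m → Fin (m + 1) → R) (x : Fin (m + 1) → R) (N : R)
    (horth : Pairwise fun i j => r i ⬝ᵥ r j = 0) (hlen : ∀ i, r i ⬝ᵥ r i = N)
    (hx : ∀ i, r i ⬝ᵥ x = 0) :
    det (of (Fin.snoc r x)) ^ 2 = N ^ m * (x ⬝ᵥ x) := by
  rw [det_of_sq_eq_prod_dotProduct_self, Fin.prod_univ_castSucc]
  · simp [hlen]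
  · intro i j hij
    induction i using Fin.lastCases <;> induction j using Fin.lastCases
    · exact absurd rfl hij
    · simp [dotProduct_comm x, hx]
    · simp [hx]
    · simpa using horth (fun h => hij (congrArg _ h))

theorem sq_mul_det_snoc_sq (r : Fin m → Fin (m + 1) → R) (x : Fin (m + 1) → R) (N : R)
    (horth : Pairwise fun i j => r i ⬝ᵥ r j = 0) (hlen : ∀ i, r i ⬝ᵥ r i = N) :
    N ^ 2 * det (of (Fin.snoc r x)) ^ 2 =
      N ^ (m + 1) * (N * (x ⬝ᵥ x) - ∑ i, (r i ⬝ᵥ x) ^ 2) := by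
  -- `N x` minus `N` times its orthogonal projection onto the span of the `r i`
  obtain ⟨y, hy⟩ : ∃ y, y = N • x - ∑ i, (r i ⬝ᵥ x) • r i := ⟨_, rfl⟩
  have hry : ∀ i, r i ⬝ᵥ y = 0 := by
    intro i
    rw [hy, dotProduct_sub, dotProduct_smul, dotProduct_sum, Finset.sum_eq_single i]
    · simp [dotProduct_smul, hlen, mul_comm]
    · intro j _ hji
      rw [dotProduct_smul, horth hji.symm, smul_zero]
    · simp
  have hyx : y ⬝ᵥ x = N * (x ⬝ᵥ x) - ∑ i, (r i ⬝ᵥ x) ^ 2 := by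
    simp [hy, sub_dotProduct, sum_dotProduct, smul_dotProduct, sq]
  have hyy : y ⬝ᵥ y = N * (y ⬝ᵥ x) := by
    nth_rw 2 [hy]
    rw [dotProduct_sub, dotProduct_smul, dotProduct_sum]
    simp [dotProduct_comm y, hry]
  have hdet : det (of (Fin.snoc r y)) = N * det (of (Fin.snoc r x)) := by
    have hcomb : y = ∑ k, (Fin.snoc (fun i => -(r i ⬝ᵥ x)) N : Fin (m + 1) → R) k •
        of (Fin.snoc r x) k := by
      ext j
      simp [Fin.sum_univ_castSucc, hy, sub_eq_neg_add]
    rw [← updateRow_of_snoc_last r x y, hcomb, det_updateRow_sum]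
    simp
  calc N ^ 2 * det (of (Fin.snoc r x)) ^ 2 = det (of (Fin.snoc r y)) ^ 2 := by
        rw [hdet]; ring
    _ = N ^ m * (y ⬝ᵥ y) := det_snoc_sq_of_orthogonal r y N horth hlen hry
    _ = _ := by rw [hyy, hyx]; ring

end SnocRow

section CrossVec

variable {R : Type*} [CommRing R] {m : ℕ}

/-- The generalized cross product of `m` vectors in `R^(m+1)`: the cofactors of the last row. -/
def crossVec (r : Fin m → Fin (m + 1) → R) : Fin (m + 1) → R :=
  fun j => det (of (Fin.snoc r (Pi.single j 1)))

theorem dotProduct_crossVec (r : Fin m → Fin (m + 1) → R) (x : Fin (m + 1) → R) :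
    x ⬝ᵥ crossVec r = det (of (Fin.snoc r x)) := by
  have h := congrFun (congrFun (mul_adjugate (of (Fin.snoc r x))) (Fin.last m)) (Fin.last m)
  simpa [mul_apply, adjugate_apply, updateRow_of_snoc_last, dotProduct, crossVec] using h

theorem row_dotProduct_crossVec (r : Fin m → Fin (m + 1) → R) (i : Fin m) :
    r i ⬝ᵥ crossVec r = 0 := by
  rw [dotProduct_crossVec]
  exact det_zero_of_row_eq (Fin.castSucc_lt_last i).ne (funext fun k => by simp)

theorem sq_mul_crossVec_sq (r : Fin m → Fin (m + 1) → R) (N : R)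
    (horth : Pairwise fun i j => r i ⬝ᵥ r j = 0) (hlen : ∀ i, r i ⬝ᵥ r i = N) (j : Fin (m + 1)) :
    N ^ 2 * crossVec r j ^ 2 = N ^ (m + 1) * (N - ∑ i, r i j ^ 2) := by
  simpa [crossVec, dotProduct_single] using sq_mul_det_snoc_sq r (Pi.single j 1) N horth hlen

theorem sq_mul_crossVec_dotProduct_self (r : Fin m → Fin (m + 1) → R) (N : R)
    (horth : Pairwise fun i j => r i ⬝ᵥ r j = 0) (hlen : ∀ i, r i ⬝ᵥ r i = N) :
    N ^ 2 * (crossVec r ⬝ᵥ crossVec r) = N ^ (m + 2) := by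
  have hcols : ∑ j, ∑ i, r i j ^ 2 = m * N := calc
    ∑ j, ∑ i, r i j ^ 2 = ∑ i, r i ⬝ᵥ r i := by rw [Finset.sum_comm]; simp [dotProduct, sq]
    _ = m * N := by simp [hlen]
  calc N ^ 2 * (crossVec r ⬝ᵥ crossVec r) = ∑ j, N ^ 2 * crossVec r j ^ 2 := by
        simp [dotProduct, Finset.mul_sum, sq]
    _ = N ^ (m + 1) * ((m + 1) * N - ∑ j, ∑ i, r i j ^ 2) := by
        simp [sq_mul_crossVec_sq r N horth hlen, ← Finset.mul_sum]
    _ = N ^ (m + 2) := by rw [hcols]; ring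

end CrossVec

theorem exists_eq_sq_of_sq_eq_pow_odd {R : Type*} [CommMonoidWithZero R]
    [UniqueFactorizationMonoid R] {a d : R} {n : ℕ} (hn : Odd n) (h : d ^ 2 = a ^ n) :
    ∃ c, a = c ^ 2 := by
  obtain ⟨s, rfl⟩ := hn
  rcases eq_or_ne a 0 with rfl | ha
  · exact ⟨0, by simp⟩
  obtain ⟨c, rfl⟩ : a ^ s ∣ d := by
    rw [← UniqueFactorizationMonoid.pow_dvd_pow_iff_dvd two_ne_zero, h, ← pow_mul]
    exact pow_dvd_pow a (by omega)
  refine ⟨c, mul_left_cancel₀ (pow_ne_zero (2 * s) ha) ?_⟩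
  rw [← pow_succ, ← h, mul_pow, ← pow_mul, mul_comm s 2]

theorem exists_orthogonal_of_sq {R : Type*} [CommRing R] [IsDomain R]
    [UniqueFactorizationMonoid R] {m : ℕ} (r : Fin (m + 1) → Fin (m + 2) → R) {k : R}
    (hk : k ≠ 0) (horth : Pairwise fun i j => r i ⬝ᵥ r j = 0) (hlen : ∀ i, r i ⬝ᵥ r i = k ^ 2) :
    ∃ w, w ≠ 0 ∧ (∀ i, r i ⬝ᵥ w = 0) ∧ w ⬝ᵥ w = k ^ 2 := by
  have hk4 : (k ^ 2) ^ 2 ≠ 0 := pow_ne_zero 2 (pow_ne_zero 2 hk)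
  have hdvd : ∀ j, k ^ m ∣ crossVec r j := by
    intro j
    rw [← UniqueFactorizationMonoid.pow_dvd_pow_iff_dvd two_ne_zero]
    refine ⟨k ^ 2 - ∑ i, r i j ^ 2, mul_left_cancel₀ hk4 ?_⟩
    rw [sq_mul_crossVec_sq r (k ^ 2) horth hlen j]
    ring
  choose w hw using hdvd
  have hcross : crossVec r = k ^ m • w := funext hw
  have hww : w ⬝ᵥ w = k ^ 2 := by
    have h := sq_mul_crossVec_dotProduct_self r (k ^ 2) horth hlen
    rw [hcross, smul_dotProduct, dotProduct_smul, smul_eq_mul, smul_eq_mul] at h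
    refine mul_left_cancel₀ (mul_ne_zero hk4 (pow_ne_zero (2 * m) hk)) ?_
    linear_combination h
  refine ⟨w, fun hw0 => hk ?_, fun i => ?_, hww⟩
  · exact pow_eq_zero_iff two_ne_zero |>.mp (by simpa [hw0] using hww.symm)
  · have h := row_dotProduct_crossVec r i
    rw [hcross, dotProduct_smul, smul_eq_mul] at h
    exact (mul_eq_zero.mp h).resolve_left (pow_ne_zero m hk)

/-- For odd n ≥ 3, an (n-1)-icube in ℤⁿ with edge norm N extends to an
n-icube if and only if N is a perfect square. -/
theorem icube_extend_odd_iff_square (n : ℕ) (hn : 3 ≤ n) (hodd : Odd n)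
    (v : Fin (n - 1) → (Fin n → ℤ)) (N : ℤ)
    (hnz : ∀ ℓ, v ℓ ≠ 0)
    (horth : ∀ i j, i ≠ j → ∑ t, v i t * v j t = 0)
    (hlen : ∀ i, ∑ t, v i t * v i t = N) :
    (∃ w : Fin n → ℤ, w ≠ 0 ∧ (∀ i, ∑ t, v i t * w t = 0) ∧
        ∑ t, w t * w t = N) ↔ ∃ k : ℤ, N = k ^ 2 := by
  obtain ⟨m, rfl⟩ : ∃ m, n = m + 2 := ⟨n - 2, by omega⟩
  constructor
  · rintro ⟨w, -, hw, hww⟩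
    refine exists_eq_sq_of_sq_eq_pow_odd hodd (d := det (of (Fin.snoc v w))) ?_
    rw [det_snoc_sq_of_orthogonal (m := m + 1) v w N horth hlen hw, show w ⬝ᵥ w = N from hww]
    ring
  · rintro ⟨k, rfl⟩
    have hk : k ≠ 0 := by
      rintro rfl
      refine hnz (0 : Fin (m + 1)) (dotProduct_self_eq_zero.mp ?_)
      simpa [dotProduct] using hlen (0 : Fin (m + 1))
    exact exists_orthogonal_of_sq v hk horth hlen
end

section
/- If n is odd, then the edge length of any n-icube in ℤⁿ is an integer; equivalently, the edge norm is a perfect square. -/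
/-!
The vectors of an icube are the rows of a matrix `M` with `M * Mᵀ = N • 1`, so
`(det M)² = Nⁿ`. For odd `n = 2m + 1` this says `N · (Nᵐ)²` is a square, and since `ℤ` is
integrally closed, `(Nᵐ)² ∣ (det M)²` forces `Nᵐ ∣ det M`; cancelling `Nᵐ` shows `N` is a square.
-/

open Matrix

theorem isSquare_of_isSquare_pow_of_odd {R : Type*} [CommRing R] [IsDomain R]
    [IsIntegrallyClosed R] {a : R} {n : ℕ} (hn : Odd n) (h : IsSquare (a ^ n)) :
    IsSquare a := by
  obtain ⟨m, rfl⟩ := hn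
  obtain ⟨d, hd⟩ := (isSquare_iff_exists_sq _).mp h
  by_cases ha : a = 0
  · exact ha ▸ IsSquare.zero
  have hdvd : (a ^ m) ^ 2 ∣ d ^ 2 := ⟨a, by rw [← hd, ← pow_mul, pow_succ, mul_comm m 2]⟩
  obtain ⟨e, rfl⟩ := (IsIntegrallyClosed.pow_dvd_pow_iff two_ne_zero).mp hdvd
  refine (isSquare_iff_exists_sq a).mpr ⟨e, mul_left_cancel₀ (pow_ne_zero (2 * m) ha) ?_⟩
  rw [← pow_succ, hd, mul_pow, ← pow_mul, mul_comm m 2]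

theorem Matrix.mul_transpose_eq_smul_one {m n R : Type*} [Fintype n] [DecidableEq m]
    [CommRing R] {M : Matrix m n R} {N : R} (horth : Pairwise fun i j ↦ M i ⬝ᵥ M j = 0)
    (hlen : ∀ i, M i ⬝ᵥ M i = N) : M * Mᵀ = N • 1 := by
  ext i j
  rw [mul_apply', smul_apply, one_apply]
  rcases eq_or_ne i j with rfl | hij
  · simp [hlen i]
  · simp [hij, horth hij]

theorem Matrix.det_sq_eq_pow_card_of_mul_transpose_eq_smul_one {n R : Type*} [Fintype n]
    [DecidableEq n] [CommRing R] {M : Matrix n n R} {N : R} (h : M * Mᵀ = N • 1) :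
    M.det ^ 2 = N ^ Fintype.card n := by
  simpa [det_mul, det_transpose, det_smul, ← sq] using congrArg det h

theorem icube_odd_dim_norm_square_general (n : ℕ) (hodd : Odd n)
    (v : Fin n → (Fin n → ℤ)) (N : ℤ)
    (horth : ∀ i j, i ≠ j → ∑ t, v i t * v j t = 0)
    (hlen : ∀ i, ∑ t, v i t * v i t = N) :
    ∃ k : ℤ, N = k ^ 2 := by
  have hgram : of v * (of v)ᵀ = N • 1 := mul_transpose_eq_smul_one horth hlen
  have hdet : (of v).det ^ 2 = N ^ n := by
    simpa using det_sq_eq_pow_card_of_mul_transpose_eq_smul_one hgram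
  exact (isSquare_iff_exists_sq N).mp
    (isSquare_of_isSquare_pow_of_odd hodd ((isSquare_iff_exists_sq _).mpr ⟨_, hdet.symm⟩))

/-- If n is odd, the edge norm of any n-icube in ℤⁿ is a perfect square. -/
theorem icube_odd_dim_norm_square (n : ℕ) (hodd : Odd n)
    (v : Fin n → (Fin n → ℤ)) (N : ℤ)
    (hnz : ∀ ℓ, v ℓ ≠ 0)
    (horth : ∀ i j, i ≠ j → ∑ t, v i t * v j t = 0)
    (hlen : ∀ i, ∑ t, v i t * v i t = N) :
    ∃ k : ℤ, N = k ^ 2 :=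
  icube_odd_dim_norm_square_general n hodd v N horth hlen
end

section
/- Every vector v ∈ ℤ⁸ with v ≠ 0 can be extended to an 8-icube in ℤ⁸, using the rows of the Cayley-number multiplication matrix: for v = (a,b,c,d,e,f,g,h), the eight rows (a,b,c,d,e,f,g,h), (b,−a,d,−c,f,−e,−h,g), (c,−d,−a,b,g,h,−e,−f), (d,c,−b,−a,h,−g,f,−e), (e,−f,−g,−h,−a,b,c,d), (f,e,−h,g,−b,−a,−d,c), (g,h,e,−f,−c,d,−a,−b), (h,−g,f,e,−d,−c,b,−a) are pairwise orthogonal and of equal length. -/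
/-!
`cayleyMatrix v` is the matrix of multiplication by the Cayley number (octonion) `v`.
Polarizing the multiplicativity of the octonion norm gives `A * Aᵀ = (v ⬝ᵥ v) • 1`: the rows
are pairwise orthogonal and all have squared length `v ⬝ᵥ v`. A zero row would therefore force
`v ⬝ᵥ v = 0`, which over an ordered ring means `v = 0`.
-/

open Matrix

section CayleyMatrix

variable {R : Type*}

def cayleyMatrix [Neg R] (v : Fin 8 → R) : Matrix (Fin 8) (Fin 8) R :=
  !![v 0, v 1, v 2, v 3, v 4, v 5, v 6, v 7;
     v 1, -v 0, v 3, -v 2, v 5, -v 4, -v 7, v 6;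
     v 2, -v 3, -v 0, v 1, v 6, v 7, -v 4, -v 5;
     v 3, v 2, -v 1, -v 0, v 7, -v 6, v 5, -v 4;
     v 4, -v 5, -v 6, -v 7, -v 0, v 1, v 2, v 3;
     v 5, v 4, -v 7, v 6, -v 1, -v 0, -v 3, v 2;
     v 6, v 7, v 4, -v 5, -v 2, v 3, -v 0, -v 1;
     v 7, -v 6, v 5, v 4, -v 3, -v 2, v 1, -v 0]

theorem cayleyMatrix_mul_transpose [CommRing R] (v : Fin 8 → R) :
    cayleyMatrix v * (cayleyMatrix v)ᵀ = (v ⬝ᵥ v) • (1 : Matrix (Fin 8) (Fin 8) R) := by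
  ext i j
  fin_cases i <;> fin_cases j <;>
    simp [cayleyMatrix, mul_apply, dotProduct, Fin.sum_univ_eight] <;> ring

theorem cayleyMatrix_dotProduct [CommRing R] (v : Fin 8 → R) (i j : Fin 8) :
    cayleyMatrix v i ⬝ᵥ cayleyMatrix v j = if i = j then v ⬝ᵥ v else 0 := by
  simpa [mul_apply, one_apply, dotProduct] using
    congrFun₂ (cayleyMatrix_mul_transpose v) i j

theorem cayleyMatrix_row_ne_zero [CommRing R] [LinearOrder R] [IsStrictOrderedRing R]
    {v : Fin 8 → R} (hv : v ≠ 0) (i : Fin 8) : cayleyMatrix v i ≠ 0 := by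
  intro hrow
  have hnorm := cayleyMatrix_dotProduct v i i
  rw [if_pos rfl, hrow, zero_dotProduct] at hnorm
  exact hv (dotProduct_self_eq_zero.mp hnorm.symm)

end CayleyMatrix

/-- Every nonzero v ∈ ℤ⁸ extends to an 8-icube, explicitly given by the
rows of the Cayley-number multiplication matrix. -/
theorem int_vec8_extends_to_icube (a b c d e f g h : ℤ)
    (hne : ¬(a = 0 ∧ b = 0 ∧ c = 0 ∧ d = 0 ∧ e = 0 ∧ f = 0 ∧ g = 0 ∧ h = 0)) :
    let M : Fin 8 → (Fin 8 → ℤ) :=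
      ![![a, b, c, d, e, f, g, h],
        ![b, -a, d, -c, f, -e, -h, g],
        ![c, -d, -a, b, g, h, -e, -f],
        ![d, c, -b, -a, h, -g, f, -e],
        ![e, -f, -g, -h, -a, b, c, d],
        ![f, e, -h, g, -b, -a, -d, c],
        ![g, h, e, -f, -c, d, -a, -b],
        ![h, -g, f, e, -d, -c, b, -a]]
    (∀ ℓ, M ℓ ≠ 0) ∧ (∀ i j, i ≠ j → ∑ t, M i t * M j t = 0) ∧
      (∀ i j, ∑ t, M i t * M i t = ∑ t, M j t * M j t) := by
  intro M
  set v : Fin 8 → ℤ := ![a, b, c, d, e, f, g, h]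
  have hv : v ≠ 0 := fun hv0 => hne <| by simpa [v, funext_iff, Fin.forall_fin_succ] using hv0
  have hnorm (i : Fin 8) : ∑ t, M i t * M i t = v ⬝ᵥ v :=
    (cayleyMatrix_dotProduct v i i).trans (if_pos rfl)
  exact ⟨cayleyMatrix_row_ne_zero hv,
    fun i j hij => (cayleyMatrix_dotProduct v i j).trans (if_neg hij),
    fun i j => (hnorm i).trans (hnorm j).symm⟩
end

section
/- Let α ∈ 𝕃 with Norm(α) ≡ 4 (mod 8). Then α = (1+i)β for some β ∈ 𝕃. -/
/-!
Since `(1 + i)(p + qi + rj + sk) = (p - q) + (p + q)i + (r - s)j + (r + s)k`, the quaternion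
`a + bi + cj + dk` is a left multiple of `1 + i` exactly when `a ≡ b` and `c ≡ d (mod 2)`.
Odd squares are `1 mod 8` and even squares `0 mod 4`, so a sum of four squares that is
`4 mod 8` has either no odd or four odd terms: all four coordinates have the same parity.
-/

open scoped Quaternion

/-- The Lipschitz quaternion 1 + i. -/
def onePlusI : ℍ[ℤ] := ⟨1, 1, 0, 0⟩

lemma Int.sq_emod_eight_cases (x : ℤ) :
    (x % 2 = 1 ∧ 8 ∣ x ^ 2 - 1) ∨ (x % 2 = 0 ∧ 4 ∣ x ^ 2) := by
  rcases Int.even_or_odd x with hx | hx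
  · refine .inr ⟨Int.even_iff.mp hx, ?_⟩
    simpa using pow_dvd_pow_of_dvd (even_iff_two_dvd.mp hx) 2
  · exact .inl ⟨Int.odd_iff.mp hx, Int.eight_dvd_sq_sub_one_of_odd hx⟩

theorem Int.emod_two_eq_of_sum_four_sq_emod_eight {a b c d : ℤ}
    (h : (a ^ 2 + b ^ 2 + c ^ 2 + d ^ 2) % 8 = 4) :
    a % 2 = b % 2 ∧ b % 2 = c % 2 ∧ c % 2 = d % 2 := by
  rcases Int.sq_emod_eight_cases a with ⟨ha, ha'⟩ | ⟨ha, ha'⟩ <;>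
  rcases Int.sq_emod_eight_cases b with ⟨hb, hb'⟩ | ⟨hb, hb'⟩ <;>
  rcases Int.sq_emod_eight_cases c with ⟨hc, hc'⟩ | ⟨hc, hc'⟩ <;>
  rcases Int.sq_emod_eight_cases d with ⟨hd, hd'⟩ | ⟨hd, hd'⟩ <;>
  omega

theorem onePlusI_mul (β : ℍ[ℤ]) :
    onePlusI * β = ⟨β.re - β.imI, β.re + β.imI, β.imJ - β.imK, β.imJ + β.imK⟩ := by
  ext <;> simp only [Quaternion.re_mul, Quaternion.imI_mul, Quaternion.imJ_mul,
    Quaternion.imK_mul] <;> simp only [onePlusI] <;> ring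

theorem onePlusI_dvd_iff (α : ℍ[ℤ]) :
    onePlusI ∣ α ↔ α.re % 2 = α.imI % 2 ∧ α.imJ % 2 = α.imK % 2 := by
  constructor
  · rintro ⟨β, rfl⟩
    rw [onePlusI_mul]
    dsimp only
    omega
  · rintro ⟨hre, himJ⟩
    let β : ℍ[ℤ] :=
      ⟨(α.re + α.imI) / 2, (α.imI - α.re) / 2, (α.imJ + α.imK) / 2, (α.imK - α.imJ) / 2⟩
    refine ⟨β, ?_⟩
    rw [onePlusI_mul]
    ext <;> dsimp only [β] <;> omega

/-- If Norm(α) ≡ 4 (mod 8), then α = (1+i)β for some Lipschitz β. -/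
theorem lipschitz_norm_four_mod_eight (α : ℍ[ℤ])
    (h : Quaternion.normSq α % 8 = 4) :
    ∃ β : ℍ[ℤ], α = onePlusI * β := by
  rw [Quaternion.normSq_def'] at h
  obtain ⟨hab, -, hcd⟩ := Int.emod_two_eq_of_sum_four_sq_emod_eight h
  exact (onePlusI_dvd_iff α).2 ⟨hab, hcd⟩
end

section
/- Let α, β be nonzero quaternions and γ a nonzero quaternion. Then α and β are twins if and only if γα and γβ are twins, if and only if αγ and βγ are twins. -/
/-!
Twinness is orthogonality together with equal length for the inner product
`⟪x, y⟫ = Re (x * star y)` on `ℍ`. Multiplying on either side by `γ` scales this inner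
product by `normSq γ` (for left multiplication because `Re` is invariant under cyclic
permutation), so for `γ ≠ 0` it preserves and reflects both conditions.
-/

open scoped Quaternion

/-- Two real quaternions are twins if their coefficient vectors in ℝ⁴ are orthogonal
and have the same Euclidean norm. -/
def Twin (α β : ℍ[ℝ]) : Prop :=
  α.re * β.re + α.imI * β.imI + α.imJ * β.imJ + α.imK * β.imK = 0 ∧
    Quaternion.normSq α = Quaternion.normSq β

open Quaternion RealInnerProductSpace

theorem Quaternion.re_mul_comm {R : Type*} [CommRing R] (a b : ℍ[R]) :
    (a * b).re = (b * a).re := by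
  simp only [re_mul]
  ring

theorem Quaternion.inner_mul_mul_left (γ α β : ℍ[ℝ]) :
    ⟪γ * α, γ * β⟫ = normSq γ * ⟪α, β⟫ := by
  rw [inner_def, inner_def, star_mul, ← mul_assoc, re_mul_comm, ← mul_assoc, ← mul_assoc,
    star_mul_self, mul_assoc, coe_mul_eq_smul, re_smul, smul_eq_mul]

theorem Quaternion.inner_mul_mul_right (γ α β : ℍ[ℝ]) :
    ⟪α * γ, β * γ⟫ = normSq γ * ⟪α, β⟫ := by
  rw [inner_def, inner_def, star_mul, mul_assoc, ← mul_assoc γ, self_mul_star, ← mul_assoc,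
    mul_coe_eq_smul, smul_mul_assoc, re_smul, smul_eq_mul]

theorem twin_iff_inner (α β : ℍ[ℝ]) : Twin α β ↔ ⟪α, β⟫ = 0 ∧ ⟪α, α⟫ = ⟪β, β⟫ := by
  rw [Twin, inner_self, inner_self, inner_def, re_mul]
  simp only [re_star, imI_star, imJ_star, imK_star]
  ring_nf

theorem twin_map_iff_of_inner_map {f : ℍ[ℝ] → ℍ[ℝ]} {c : ℝ} (hc : c ≠ 0)
    (hf : ∀ x y, ⟪f x, f y⟫ = c * ⟪x, y⟫) (α β : ℍ[ℝ]) : Twin (f α) (f β) ↔ Twin α β := by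
  simp only [twin_iff_inner, hf, mul_eq_zero, hc, false_or, mul_right_inj' hc]

theorem twin_iff_mul_general (α β γ : ℍ[ℝ]) (hγ : γ ≠ 0) :
    (Twin α β ↔ Twin (γ * α) (γ * β)) ∧ (Twin α β ↔ Twin (α * γ) (β * γ)) := by
  have hγ' : normSq γ ≠ 0 := normSq_eq_zero.not.mpr hγ
  exact ⟨(twin_map_iff_of_inner_map hγ' (inner_mul_mul_left γ) α β).symm,
    (twin_map_iff_of_inner_map hγ' (inner_mul_mul_right γ) α β).symm⟩

/-- for nonzero γ, twinness is preserved and reflected by left and by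
right multiplication by γ. -/
theorem twin_iff_mul (α β γ : ℍ[ℝ]) (hα : α ≠ 0) (hβ : β ≠ 0) (hγ : γ ≠ 0) :
    (Twin α β ↔ Twin (γ * α) (γ * β)) ∧ (Twin α β ↔ Twin (α * γ) (β * γ)) :=
  twin_iff_mul_general α β γ hγ
end

section
/- If α ∈ S_g and β ∈ S_h are Lipschitz quaternions of odd norm, then αβ ∈ S_{g*h}, where * is the multiplication in {1,i,j,k} given by quaternion multiplication with signs disregarded (the Klein four-group structure). -/
open scoped Quaternion

/-- The four coefficients of a Lipschitz quaternion, indexed by the Klein four-group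
`Bool × Bool`, where (false,false) ↦ 1, (true,false) ↦ i, (false,true) ↦ j,
(true,true) ↦ k.  Multiplication of the quaternion units 1, i, j, k with signs
disregarded corresponds to componentwise `xor` on `Bool × Bool`. -/
def coeff (α : ℍ[ℤ]) : Bool × Bool → ℤ
  | (false, false) => α.re
  | (true, false) => α.imI
  | (false, true) => α.imJ
  | (true, true) => α.imK

/-- α ∈ S_g : the coefficient indexed by g has parity different from each of the
other three coefficients. -/
def InS (g : Bool × Bool) (α : ℍ[ℤ]) : Prop :=
  ∀ h : Bool × Bool, h ≠ g → coeff α g % 2 ≠ coeff α h % 2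

/-!
Reduce modulo 2, where all signs disappear: the `k`-coefficient of `αβ` becomes
`∑ p, α_p β_{p ⊻ k}`, the product in the group algebra `𝔽₂[V₄]` of the Klein four-group.
Membership in `S_g` says that the parity vector of `α` is `e_g + ε u` for some `ε`, where `u` is
the all-ones vector. Since `e_g u = u` and `u² = 4u = 0`, the product of `e_g + ε u` and
`e_h + δ u` is `e_{g ⊻ h} + (ε + δ) u`.
-/

theorem Int.emod_two_eq_iff_intCast_eq {a b : ℤ} : a % 2 = b % 2 ↔ (a : ZMod 2) = b :=
  (ZMod.intCast_eq_intCast_iff a b 2).symm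

theorem ZMod.ne_iff_eq_add_one {a b : ZMod 2} : a ≠ b ↔ b = a + 1 := by
  revert a b; decide

theorem inS_iff_intCast_coeff_eq {g : Bool × Bool} {α : ℍ[ℤ]} :
    InS g α ↔ ∃ ε : ZMod 2, ∀ p, (coeff α p : ZMod 2) = (if p = g then 1 else 0) + ε := by
  simp only [InS, Ne, Int.emod_two_eq_iff_intCast_eq, ZMod.ne_iff_eq_add_one]
  constructor
  · intro hg
    refine ⟨coeff α g + 1, fun p => ?_⟩
    by_cases hp : p = g
    · rw [hp, if_pos rfl, add_comm, add_assoc, CharTwo.add_self_eq_zero, add_zero]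
    · rw [if_neg hp, zero_add, hg p hp]
  · rintro ⟨ε, hε⟩ p hp
    rw [hε, hε, if_pos rfl, if_neg hp, zero_add, add_comm (1 : ZMod 2), add_assoc,
      CharTwo.add_self_eq_zero, add_zero]

theorem intCast_coeff_mul (α β : ℍ[ℤ]) (k : Bool × Bool) :
    (coeff (α * β) k : ZMod 2) =
      ∑ p : Bool × Bool, (coeff α p : ZMod 2) * coeff β (xor p.1 k.1, xor p.2 k.2) := by
  obtain ⟨_ | _, _ | _⟩ := k <;>
    simp only [coeff, Fintype.sum_prod_type, Fintype.sum_bool, Quaternion.re_mul,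
      Quaternion.imI_mul, Quaternion.imJ_mul, Quaternion.imK_mul, Int.cast_add, Int.cast_sub,
      Int.cast_mul, CharTwo.sub_eq_add, Bool.bne_true, Bool.bne_false, Bool.not_true,
      Bool.not_false] <;>
    ring

theorem Prod.xor_eq_iff_eq_xor (p q r : Bool × Bool) :
    (xor p.1 q.1, xor p.2 q.2) = r ↔ p = (xor r.1 q.1, xor r.2 q.2) := by
  constructor <;> rintro rfl <;> simp

theorem Prod.eq_xor_comm (g h k : Bool × Bool) :
    h = (xor g.1 k.1, xor g.2 k.2) ↔ k = (xor g.1 h.1, xor g.2 h.2) := by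
  constructor <;> rintro rfl <;> simp

theorem sum_ite_add_mul_ite_xor_add (g h k : Bool × Bool) (ε δ : ZMod 2) :
    ∑ p : Bool × Bool, ((if p = g then 1 else 0) + ε) *
        ((if (xor p.1 k.1, xor p.2 k.2) = h then 1 else 0) + δ) =
      (if k = (xor g.1 h.1, xor g.2 h.2) then 1 else 0) + (ε + δ) := by
  have hcard : Fintype.card (Bool × Bool) • (ε * δ) = 0 := by
    rw [nsmul_eq_mul, show ((Fintype.card (Bool × Bool) : ℕ) : ZMod 2) = 0 from rfl, zero_mul]
  simp only [add_mul, mul_add, ite_mul, one_mul, zero_mul, mul_ite, mul_one, mul_zero,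
    Finset.sum_add_distrib, Prod.xor_eq_iff_eq_xor, Finset.sum_ite_eq', Finset.mem_univ,
    if_true, Finset.sum_const, Finset.card_univ, hcard, add_zero, Prod.eq_xor_comm, add_assoc]

theorem mul_mem_S_general (α β : ℍ[ℤ]) (g h : Bool × Bool)
    (hg : InS g α) (hh : InS h β) :
    InS (xor g.1 h.1, xor g.2 h.2) (α * β) := by
  obtain ⟨ε, hε⟩ := inS_iff_intCast_coeff_eq.1 hg
  obtain ⟨δ, hδ⟩ := inS_iff_intCast_coeff_eq.1 hh
  refine inS_iff_intCast_coeff_eq.2 ⟨ε + δ, fun k => ?_⟩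
  simp only [intCast_coeff_mul, hε, hδ, sum_ite_add_mul_ite_xor_add]

/-- if α ∈ S_g and β ∈ S_h have odd norm, then αβ ∈ S_{g*h}, where *
is the Klein four-group multiplication (componentwise xor). -/
theorem mul_mem_S (α β : ℍ[ℤ]) (g h : Bool × Bool)
    (hα : Odd (Quaternion.normSq α)) (hβ : Odd (Quaternion.normSq β))
    (hg : InS g α) (hh : InS h β) :
    InS (xor g.1 h.1, xor g.2 h.2) (α * β) :=
  mul_mem_S_general α β g h hg hh
end

section
/- The primary Lipschitz quaternions are closed under multiplication: if α and β are primary, then αβ is primary. Moreover, if α, β are primary and β = αγ (or β = γα) with γ a Hurwitz quaternion, then γ is primary. -/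
open scoped Quaternion

/-- Build a rational quaternion from four rationals. -/
def mkQ (a b c d : ℚ) : ℍ[ℚ] := ⟨a, b, c, d⟩

/-- A rational quaternion is a Lipschitz quaternion if all its coefficients are
integers. -/
def IsLipschitz (α : ℍ[ℚ]) : Prop :=
  ∃ a b c d : ℤ, α = mkQ a b c d

/-- A rational quaternion is a Hurwitz quaternion if its coefficients are all in ℤ
or all in ℤ + 1/2, i.e. 2α has integer coefficients of equal parity. -/
def IsHurwitz (α : ℍ[ℚ]) : Prop :=
  ∃ a b c d : ℤ, (2 : ℚ) • α = mkQ a b c d ∧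
    a % 2 = b % 2 ∧ b % 2 = c % 2 ∧ c % 2 = d % 2

/-- A unit of the Hurwitz order: a Hurwitz quaternion of norm 1. -/
def IsHurwitzUnit (ε : ℍ[ℚ]) : Prop :=
  IsHurwitz ε ∧ Quaternion.normSq ε = 1

/-- A primary (Lipschitz) quaternion: a₁ odd, the other coefficients even, and the
sum of the coefficients ≡ 1 (mod 4). -/
def Primary (α : ℍ[ℚ]) : Prop :=
  ∃ a b c d : ℤ, α = mkQ a b c d ∧ Odd a ∧ Even b ∧ Even c ∧ Even d ∧
    (a + b + c + d) % 4 = 1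

/-!
Write a primary quaternion as `1 + 2δ` with `δ` Lipschitz of even coefficient sum; since
`a + b + c + d ≡ a² + b² + c² + d² (mod 2)`, that parity is multiplicative. Products stay primary
because `(1 + 2δ)(1 + 2ε) = 1 + 2(δ + ε + 2δε)`. If `β = αγ` with `γ` Lipschitz, then
`γ = αγ - 2δγ = 1 + 2(ε - δγ)`, and `δγ` again has even coefficient sum. A half-integral `γ` is
impossible: `α ≡ 1 (mod 2)` gives `2γ ≡ α(2γ) = 2β ≡ 0 (mod 2)`, yet `2γ` has odd coordinates.
-/

namespace Quaternion

def toRatHom : ℍ[ℤ] →+* ℍ[ℚ] where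
  toFun z := mkQ z.re z.imI z.imJ z.imK
  map_one' := by ext <;> simp [mkQ]
  map_mul' x y := by
    ext <;> simp only [re_mul, imI_mul, imJ_mul, imK_mul] <;> simp [mkQ]
  map_zero' := by ext <;> simp [mkQ]
  map_add' x y := by ext <;> simp only [re_add, imI_add, imJ_add, imK_add] <;> simp [mkQ]

theorem toRatHom_apply (z : ℍ[ℤ]) : toRatHom z = mkQ z.re z.imI z.imJ z.imK := rfl

theorem toRatHom_injective : Function.Injective toRatHom := fun x y h => by
  obtain ⟨hre, hi, hj, hk⟩ := QuaternionAlgebra.mk.inj h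
  ext <;> assumption_mod_cast

def coeffSum : ℍ[ℤ] →+ ℤ where
  toFun z := z.re + z.imI + z.imJ + z.imK
  map_zero' := by simp
  map_add' x y := by simp only [re_add, imI_add, imJ_add, imK_add]; ring

theorem coeffSum_mul (x y : ℍ[ℤ]) : coeffSum (x * y) = coeffSum x * coeffSum y -
    2 * (x.imI * y.imI + x.imJ * y.imJ + x.imK * y.imK + x.imI * y.imK + x.imJ * y.imI +
      x.imK * y.imJ) := by
  simp only [coeffSum, AddMonoidHom.coe_mk, ZeroHom.coe_mk, re_mul, imI_mul, imJ_mul, imK_mul]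
  ring

theorem even_coeffSum_mul {x y : ℍ[ℤ]} :
    Even (coeffSum (x * y)) ↔ Even (coeffSum x) ∨ Even (coeffSum y) := by
  rw [coeffSum_mul, Int.even_sub, Int.even_mul]
  simp

-- `2 •` rather than `2 *`: simp computes the coordinates of `2 • δ`, not those of `(2 : ℍ[ℤ])`.
def IsPrimary (z : ℍ[ℤ]) : Prop :=
  ∃ δ, z = 1 + 2 • δ ∧ Even (coeffSum δ)

theorem primary_iff_isPrimary {α : ℍ[ℚ]} : Primary α ↔ ∃ z, α = toRatHom z ∧ IsPrimary z := by
  constructor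
  · rintro ⟨a, b, c, d, rfl, ha, hb, hc, hd, hs⟩
    rw [Int.odd_iff] at ha
    rw [Int.even_iff] at hb hc hd
    obtain ⟨δ, hre, hi, hj, hk⟩ : ∃ δ : ℍ[ℤ],
        δ.re = (a - 1) / 2 ∧ δ.imI = b / 2 ∧ δ.imJ = c / 2 ∧ δ.imK = d / 2 :=
      ⟨⟨_, _, _, _⟩, rfl, rfl, rfl, rfl⟩
    refine ⟨⟨a, b, c, d⟩, rfl, δ, ?_, ?_⟩
    · ext <;> simp [hre, hi, hj, hk, -nsmul_eq_mul] <;> omega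
    · simp only [coeffSum, AddMonoidHom.coe_mk, ZeroHom.coe_mk, hre, hi, hj, hk, Int.even_iff]
      omega
  · rintro ⟨z, rfl, δ, rfl, hδ⟩
    refine ⟨_, _, _, _, rfl, ?_, ?_, ?_, ?_, ?_⟩
    all_goals simp [coeffSum, Int.even_iff, -nsmul_eq_mul] at hδ ⊢
    all_goals omega

variable {a b g : ℍ[ℤ]}

theorem IsPrimary.mul (ha : IsPrimary a) (hb : IsPrimary b) : IsPrimary (a * b) := by
  obtain ⟨δ, rfl, hδ⟩ := ha
  obtain ⟨ε, rfl, hε⟩ := hb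
  refine ⟨δ + ε + 2 • (δ * ε), by noncomm_ring, ?_⟩
  rw [map_add, map_add, map_nsmul, two_nsmul]
  exact (hδ.add hε).add ⟨_, rfl⟩

theorem IsPrimary.right_of_mul (ha : IsPrimary a) (hag : IsPrimary (a * g)) : IsPrimary g := by
  obtain ⟨δ, rfl, hδ⟩ := ha
  obtain ⟨ε, hε, hεs⟩ := hag
  refine ⟨ε - δ * g, ?_, ?_⟩
  · rw [smul_sub, ← add_sub_assoc, ← hε]
    noncomm_ring
  · rw [map_sub]
    exact hεs.sub (even_coeffSum_mul.2 (.inl hδ))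

theorem IsPrimary.left_of_mul (ha : IsPrimary a) (hga : IsPrimary (g * a)) : IsPrimary g := by
  obtain ⟨δ, rfl, hδ⟩ := ha
  obtain ⟨ε, hε, hεs⟩ := hga
  refine ⟨ε - g * δ, ?_, ?_⟩
  · rw [smul_sub, ← add_sub_assoc, ← hε]
    noncomm_ring
  · rw [map_sub]
    exact hεs.sub (even_coeffSum_mul.2 (.inr hδ))

theorem IsPrimary.even_re_of_mul_eq_two_nsmul {h : ℍ[ℤ]} (ha : IsPrimary a)
    (hah : a * h = 2 • b ∨ h * a = 2 • b) : Even h.re := by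
  obtain ⟨δ, rfl, -⟩ := ha
  suffices ∃ c, h = 2 • c by
    obtain ⟨c, rfl⟩ := this
    simp [-nsmul_eq_mul]
  rcases hah with e | e
  · exact ⟨b - δ * h, by rw [smul_sub, ← e]; noncomm_ring⟩
  · exact ⟨b - h * δ, by rw [smul_sub, ← e]; noncomm_ring⟩

theorem _root_.IsHurwitz.exists_eq_toRatHom_or_two_smul_eq {γ : ℍ[ℚ]} (hγ : IsHurwitz γ) :
    (∃ g, γ = toRatHom g) ∨ ∃ h, (2 : ℚ) • γ = toRatHom h ∧ Odd h.re := by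
  obtain ⟨a, b, c, d, h2, hab, hbc, hcd⟩ := hγ
  rcases Int.emod_two_eq_zero_or_one a with ha | ha
  · obtain ⟨g, hre, hi, hj, hk⟩ : ∃ g : ℍ[ℤ],
        2 * g.re = a ∧ 2 * g.imI = b ∧ 2 * g.imJ = c ∧ 2 * g.imK = d :=
      ⟨⟨a / 2, b / 2, c / 2, d / 2⟩, by dsimp only; omega⟩
    refine .inl ⟨g, smul_right_injective ℍ[ℚ] (two_ne_zero (α := ℚ)) ?_⟩
    change (2 : ℚ) • γ = (2 : ℚ) • toRatHom g
    rw [h2, two_smul, ← two_nsmul, ← map_nsmul, toRatHom_apply]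
    simp [← hre, ← hi, ← hj, ← hk, -nsmul_eq_mul]
  · exact .inr ⟨⟨a, b, c, d⟩, h2, Int.odd_iff.2 ha⟩

end Quaternion

open Quaternion

/-- primary quaternions are closed under multiplication, and a Hurwitz
quotient (left or right) of primary quaternions is primary. -/
theorem primary_mul_and_quotient :
    (∀ α β : ℍ[ℚ], Primary α → Primary β → Primary (α * β)) ∧
      (∀ α β γ : ℍ[ℚ], Primary α → Primary β → IsHurwitz γ →
        (β = α * γ ∨ β = γ * α) → Primary γ) := by
  refine ⟨fun α β hα hβ => ?_, fun α β γ hα hβ hγ hβγ => ?_⟩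
  · obtain ⟨a, rfl, ha⟩ := primary_iff_isPrimary.1 hα
    obtain ⟨b, rfl, hb⟩ := primary_iff_isPrimary.1 hβ
    exact primary_iff_isPrimary.2 ⟨a * b, (map_mul _ _ _).symm, ha.mul hb⟩
  obtain ⟨a, rfl, ha⟩ := primary_iff_isPrimary.1 hα
  obtain ⟨b, rfl, hb⟩ := primary_iff_isPrimary.1 hβ
  rcases hγ.exists_eq_toRatHom_or_two_smul_eq with ⟨g, rfl⟩ | ⟨h, h2, hodd⟩
  · refine primary_iff_isPrimary.2 ⟨g, rfl, ?_⟩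
    rcases hβγ with e | e <;> rw [← map_mul, toRatHom_injective.eq_iff] at e <;> subst e
    exacts [ha.right_of_mul hb, ha.left_of_mul hb]
  · have hah : a * h = 2 • b ∨ h * a = 2 • b := by
      refine hβγ.imp (fun e => toRatHom_injective ?_) (fun e => toRatHom_injective ?_) <;>
        rw [map_mul, map_nsmul, ← h2, e, two_nsmul, ← two_smul ℚ]
      exacts [mul_smul_comm _ _ _, smul_mul_assoc _ _ _]
    exact absurd (ha.even_re_of_mul_eq_two_nsmul hah) (Int.not_even_iff_odd.2 hodd)
end

section
/- Let f₄(N) denote the number of 4-icubes in ℤ⁴ with edge norm N, and f₃(N) the number of 3-icubes in ℤ⁴ with edge norm N. Then f₄(N) = 2·f₃(N) for every positive integer N. -/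
/-!
A 3-icube `w` of edge norm `N > 0` in `ℤ⁴` extends to a 4-icube in exactly two ways.
Uniqueness up to sign: if `x` and `u` are orthogonal to the rows of `w` and have norm `N`, the
Gram determinants of `(w, x)` and `(w, u)` give `(x ⬝ᵥ u)² = N²`, which is the equality case of
Cauchy–Schwarz, so `x = ±u`. Existence: the cofactor vector `c` of the rows of `w` is orthogonal
to them, and the Gram determinant of `(w, eₛ)` gives `cₛ² = N² (N - Σᵢ wᵢₛ²)`. Hence `N ∣ c` and
`c / N` is an integer vector of norm `N` orthogonal to `w`; this is where the dimension four
enters.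
-/

open Matrix

namespace Icube

def IsIcube {m n : ℕ} (N : ℤ) (v : Fin m → Fin n → ℤ) : Prop :=
  (∀ ℓ, v ℓ ≠ 0) ∧ (Pairwise fun i j => v i ⬝ᵥ v j = 0) ∧ ∀ i, v i ⬝ᵥ v i = N

theorem isIcube_snoc_iff {m n : ℕ} {N : ℤ} (hN : 0 < N) {w : Fin m → Fin n → ℤ}
    {x : Fin n → ℤ} :
    IsIcube N (Fin.snoc w x : Fin (m + 1) → Fin n → ℤ) ↔
      IsIcube N w ∧ (∀ j, x ⬝ᵥ w j = 0) ∧ x ⬝ᵥ x = N := by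
  constructor
  · rintro ⟨hne, horth, hnorm⟩
    refine ⟨⟨fun i => ?_, fun i j hij => ?_, fun i => ?_⟩, fun j => ?_, ?_⟩
    · simpa using hne i.castSucc
    · simpa using horth (Fin.castSucc_injective _ |>.ne hij)
    · simpa using hnorm i.castSucc
    · simpa using horth (Fin.castSucc_lt_last j).ne'
    · simpa using hnorm (Fin.last m)
  · rintro ⟨⟨hne, horth, hnorm⟩, hx, hxx⟩
    have hx0 : x ≠ 0 := by rintro rfl; simp [hN.ne] at hxx
    refine ⟨Fin.lastCases (by simpa) (by simpa), fun i j hij => ?_,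
      Fin.lastCases (by simpa) (by simpa)⟩
    induction i using Fin.lastCases <;> induction j using Fin.lastCases
    · exact absurd rfl hij
    · simp [hx]
    · simp [dotProduct_comm, hx]
    · simpa using horth (ne_of_apply_ne _ hij)

section cross

variable {R : Type*} [CommRing R] {n : ℕ}

def cross (w : Fin n → Fin (n + 1) → R) (s : Fin (n + 1)) : R :=
  det (of (Fin.snoc w (Pi.single s 1)))

theorem dotProduct_cross (w : Fin n → Fin (n + 1) → R) (x : Fin (n + 1) → R) :
    x ⬝ᵥ cross w = det (of (Fin.snoc w x)) := by
  let L := (detRowAlternating (R := R) (n := Fin (n + 1))).toMultilinearMap.toLinearMap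
    (Fin.snoc w 0) (Fin.last n)
  have hL : ∀ y, L y = det (of (Fin.snoc w y)) := fun y => by
    simp only [L, MultilinearMap.toLinearMap_apply, Fin.update_snoc_last]; rfl
  rw [← hL, LinearMap.pi_apply_eq_sum_univ, dotProduct]
  refine Finset.sum_congr rfl fun s _ => ?_
  rw [hL, cross, smul_eq_mul]
  congr 4
  ext j
  simp [Pi.single_apply, eq_comm]

theorem dotProduct_cross_eq_zero (w : Fin n → Fin (n + 1) → R) (j : Fin n) :
    w j ⬝ᵥ cross w = 0 := by
  rw [dotProduct_cross]
  exact det_zero_of_row_eq (Fin.castSucc_lt_last j).ne (by ext; simp)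

end cross

section orthogonalComplement

variable {n : ℕ} {N : ℤ} {w : Fin n → Fin (n + 1) → ℤ}
  (hw : Pairwise fun i j => w i ⬝ᵥ w j = 0) (hwN : ∀ i, w i ⬝ᵥ w i = N)
include hw hwN

theorem det_mul_det_snoc {x y : Fin (n + 1) → ℤ} (hx : ∀ j, x ⬝ᵥ w j = 0)
    (hy : ∀ j, y ⬝ᵥ w j = 0) :
    det (of (Fin.snoc w x)) * det (of (Fin.snoc w y)) = N ^ n * (x ⬝ᵥ y) := by
  have hgram : of (Fin.snoc w x) * (of (Fin.snoc w y))ᵀ =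
      diagonal (Fin.snoc (fun _ => N) (x ⬝ᵥ y) : Fin (n + 1) → ℤ) := by
    ext i j
    change Fin.snoc (α := fun _ => Fin (n + 1) → ℤ) w x i ⬝ᵥ
      Fin.snoc (α := fun _ => Fin (n + 1) → ℤ) w y j = _
    rw [diagonal_apply]
    induction i using Fin.lastCases <;> induction j using Fin.lastCases
    · simp
    · simp [(Fin.castSucc_lt_last _).ne', hx]
    · simp [(Fin.castSucc_lt_last _).ne, dotProduct_comm, hy]
    · rename_i i j
      by_cases hij : i = j
      · subst hij; simp [hwN]
      · simp [hij, hw hij]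
  rw [← det_transpose (of (Fin.snoc w y)), ← det_mul, hgram, det_diagonal,
    Fin.prod_univ_castSucc]
  simp

theorem eq_or_eq_neg_of_dotProduct_eq_zero (hN : 0 < N) {x u : Fin (n + 1) → ℤ}
    (hx : ∀ j, x ⬝ᵥ w j = 0) (hxN : x ⬝ᵥ x = N) (hu : ∀ j, u ⬝ᵥ w j = 0) (huN : u ⬝ᵥ u = N) :
    x = u ∨ x = -u := by
  set d := x ⬝ᵥ u
  have hd : d ^ 2 = N ^ 2 := by
    have h := congrArg₂ (· * ·) (det_mul_det_snoc hw hwN hx hu) (det_mul_det_snoc hw hwN hx hu)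
    rw [mul_mul_mul_comm, mul_comm (det _), det_mul_det_snoc hw hwN hx hx,
      det_mul_det_snoc hw hwN hu hu, hxN, huN] at h
    have hN' : N ^ n * N ^ n ≠ 0 := by positivity
    exact mul_left_cancel₀ hN' (by linear_combination -h)
  have hpar : N • x = d • u := by
    rw [← sub_eq_zero, ← dotProduct_self_eq_zero]
    simp only [sub_dotProduct, dotProduct_sub, smul_dotProduct, dotProduct_smul, hxN, huN,
      dotProduct_comm u x, smul_eq_mul]
    linear_combination -N * hd
  rcases sq_eq_sq_iff_eq_or_eq_neg.mp hd with h | h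
  · exact .inl (smul_right_injective _ hN.ne' (show N • x = N • u by rw [hpar, h]))
  · exact .inr (smul_right_injective _ hN.ne'
      (show N • x = N • -u by rw [hpar, h, neg_smul, smul_neg]))

end orthogonalComplement

def normal (N : ℤ) (w : Fin 3 → Fin 4 → ℤ) : Fin 4 → ℤ := fun s => cross w s / N

section normal

variable {N : ℤ} {w : Fin 3 → Fin 4 → ℤ}
  (hw : Pairwise fun i j => w i ⬝ᵥ w j = 0) (hwN : ∀ i, w i ⬝ᵥ w i = N)
include hw hwN

theorem cross_sq (s : Fin 4) : cross w s ^ 2 = N ^ 2 * (N - ∑ i, w i s ^ 2) := by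
  set M : Matrix (Fin 4) (Fin 4) ℤ := of (Fin.snoc w (Pi.single s 1))
  have hgram : M * Mᵀ =
      !![N, 0, 0, w 0 s; 0, N, 0, w 1 s; 0, 0, N, w 2 s; w 0 s, w 1 s, w 2 s, 1] := by
    ext i j
    fin_cases i <;> fin_cases j
    all_goals first
      | exact hwN _
      | exact hw (by decide)
      | exact dotProduct_single_one (w _) s
      | exact single_one_dotProduct s (w _)
      | exact (single_one_dotProduct s _).trans (Pi.single_eq_same s 1)
  have hdet : cross w s ^ 2 = det (M * Mᵀ) := by rw [det_mul, det_transpose, sq]; rfl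
  rw [hdet, hgram]
  simp [det_succ_row_zero, Fin.sum_univ_succ, Fin.succAbove]
  ring

theorem cross_dotProduct_self : cross w ⬝ᵥ cross w = N ^ 3 := by
  have hrows : ∑ i, ∑ s, w i s ^ 2 = 3 * N := by
    calc ∑ i, ∑ s, w i s ^ 2 = ∑ i : Fin 3, N :=
          Finset.sum_congr rfl fun i _ => by simp only [sq]; exact hwN i
      _ = 3 * N := by simp
  simp_rw [dotProduct, ← sq, cross_sq hw hwN, ← Finset.mul_sum, Finset.sum_sub_distrib,
    Finset.sum_comm (γ := Fin 4), hrows]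
  simp
  ring

theorem smul_normal : N • normal N w = cross w :=
  funext fun s => Int.mul_ediv_cancel' <|
    (Int.pow_dvd_pow_iff two_ne_zero).mp ⟨_, cross_sq hw hwN s⟩

theorem normal_dotProduct_eq_zero (hN : N ≠ 0) (j : Fin 3) : normal N w ⬝ᵥ w j = 0 := by
  refine (mul_eq_zero.mp ?_).resolve_left hN
  rw [← smul_eq_mul, ← smul_dotProduct, smul_normal hw hwN, dotProduct_comm,
    dotProduct_cross_eq_zero]

theorem normal_dotProduct_self (hN : N ≠ 0) : normal N w ⬝ᵥ normal N w = N := by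
  refine mul_left_cancel₀ (pow_ne_zero 2 hN) ?_
  calc N ^ 2 * (normal N w ⬝ᵥ normal N w) = (N • normal N w) ⬝ᵥ (N • normal N w) := by
        simp only [smul_dotProduct, dotProduct_smul, smul_eq_mul]; ring
    _ = N ^ 2 * N := by rw [smul_normal hw hwN, cross_dotProduct_self hw hwN]; ring

end normal

section count

variable {N : ℤ} (hN : 0 < N)
include hN

theorem normal_ne_zero {w : Fin 3 → Fin 4 → ℤ} (hw : IsIcube N w) : normal N w ≠ 0 := by
  intro h
  have := normal_dotProduct_self hw.2.1 hw.2.2 hN.ne'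
  simp [h, hN.ne] at this

theorem isIcube_snoc_iff_eq_normal {w : Fin 3 → Fin 4 → ℤ} (hw : IsIcube N w)
    {x : Fin 4 → ℤ} :
    IsIcube N (Fin.snoc w x : Fin 4 → Fin 4 → ℤ) ↔ x = normal N w ∨ x = -normal N w := by
  have ⟨_, horth, hnorm⟩ := hw
  rw [isIcube_snoc_iff hN]
  have hnx := normal_dotProduct_eq_zero horth hnorm hN.ne'
  have hnn := normal_dotProduct_self horth hnorm hN.ne'
  constructor
  · rintro ⟨-, hx, hxx⟩
    exact eq_or_eq_neg_of_dotProduct_eq_zero horth hnorm hN hx hxx hnx hnn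
  · rintro (rfl | rfl)
    · exact ⟨hw, hnx, hnn⟩
    · simpa using ⟨hw, hnx, hnn⟩

theorem setOf_isIcube_eq_image_snoc_smul_normal :
    {v : Fin 4 → Fin 4 → ℤ | IsIcube N v} =
      (fun p : (Fin 3 → Fin 4 → ℤ) × ℤ =>
        (Fin.snoc p.1 (p.2 • normal N p.1) : Fin 4 → Fin 4 → ℤ)) ''
        ({w | IsIcube N w} ×ˢ {1, -1}) := by
  ext v
  constructor
  · intro hv
    rw [← Fin.snoc_init_self v] at hv ⊢
    have hw := ((isIcube_snoc_iff hN).mp hv).1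
    rcases (isIcube_snoc_iff_eq_normal hN hw).mp hv with h | h
    · exact ⟨(Fin.init v, 1), ⟨hw, by simp⟩, by simp only [one_smul, h]⟩
    · exact ⟨(Fin.init v, -1), ⟨hw, by simp⟩, by simp only [neg_one_smul, h]⟩
  · rintro ⟨⟨w, ε⟩, ⟨hw, rfl | rfl⟩, rfl⟩
    · exact (isIcube_snoc_iff_eq_normal hN hw).mpr (by simp)
    · exact (isIcube_snoc_iff_eq_normal hN hw).mpr (by simp)

theorem injOn_snoc_smul_normal :
    Set.InjOn (fun p : (Fin 3 → Fin 4 → ℤ) × ℤ =>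
        (Fin.snoc p.1 (p.2 • normal N p.1) : Fin 4 → Fin 4 → ℤ))
      ({w | IsIcube N w} ×ˢ {1, -1}) := by
  rintro ⟨w, ε⟩ ⟨hw, -⟩ ⟨w', ε'⟩ - h
  obtain ⟨rfl, hε⟩ := Fin.snoc_injective2 h
  exact Prod.ext rfl (smul_left_injective ℤ (normal_ne_zero hN hw) hε)

end count

end Icube

open Icube in
/-- f₄(N) = 2·f₃(N), where f_m(N) counts (ordered) m-icubes in ℤ⁴ with
edge norm N. -/
theorem count_icube4_eq_two_mul_count_icube3 (N : ℤ) (hN : 0 < N) :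
    Set.ncard {v : Fin 4 → (Fin 4 → ℤ) |
        (∀ ℓ, v ℓ ≠ 0) ∧ (∀ i j, i ≠ j → ∑ t, v i t * v j t = 0) ∧
          (∀ i, ∑ t, v i t * v i t = N)} =
      2 * Set.ncard {v : Fin 3 → (Fin 4 → ℤ) |
        (∀ ℓ, v ℓ ≠ 0) ∧ (∀ i j, i ≠ j → ∑ t, v i t * v j t = 0) ∧
          (∀ i, ∑ t, v i t * v i t = N)} := by
  change {v | IsIcube N v}.ncard = 2 * {w | IsIcube N w}.ncard
  rw [setOf_isIcube_eq_image_snoc_smul_normal hN, (injOn_snoc_smul_normal hN).ncard_image,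
    Set.ncard_prod, Set.ncard_pair (by norm_num), mul_comm]
end
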